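/- arXiv:2505.06104 — 2 statements merged into one kernel-verified Lean document; each statement's English description precedes it below -/
import Mathlib

section
/- Fix a nonnegative integer ℓ⁻ and let π ⊴̇ σ in the ℓ⁻-twisted dominance order on partitions of the same size (i.e. the concatenation (π⁻,π⁺) of the ℓ⁻-decomposition of π is dominated by the concatenation (σ⁻,σ⁺)). Then ℓ(π⁺) ≥ ℓ(σ⁺), where ℓ denotes the number of nonzero parts. -/
/-- A partition: a weakly decreasing sequence of naturals with finitely many nonzero parts.
`f i` is the `(i+1)`-st part. -/
def IsPartition (f : ℕ → ℕ) : Prop :=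
  (∀ i j, i ≤ j → f j ≤ f i) ∧ ∃ N, ∀ i, N ≤ i → f i = 0

/-- The conjugate partition: `conjFn f j` is the number of parts of `f` that are `> j`,
i.e. the length of column `j+1` of the Young diagram of `f`. -/
noncomputable def conjFn (f : ℕ → ℕ) (j : ℕ) : ℕ :=
  Set.ncard {i : ℕ | j < f i}

/-- The number of nonzero parts of `f`. -/
noncomputable def lenFn (f : ℕ → ℕ) : ℕ :=
  Set.ncard {i : ℕ | f i ≠ 0}

/-- The size `|f|`: the number of boxes of the Young diagram of `f`. -/
noncomputable def sizeFn (f : ℕ → ℕ) : ℕ :=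
  Set.ncard {p : ℕ × ℕ | p.2 < f p.1}

/-- The (extended) dominance order on sequences: all partial sums of `f` are at most
those of `g`. -/
def Dom (f g : ℕ → ℕ) : Prop :=
  ∀ k : ℕ, ∑ i ∈ Finset.range k, f i ≤ ∑ i ∈ Finset.range k, g i

/-- The negative part `σ⁻ = (σ'_1, …, σ'_l)` of the `l`-decomposition of `σ`. -/
noncomputable def minusPart (l : ℕ) (f : ℕ → ℕ) : ℕ → ℕ :=
  fun i => if i < l then conjFn f i else 0

/-- The positive part `σ⁺ = σ - (σ⁻)'` of the `l`-decomposition of `σ`. -/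
noncomputable def plusPart (l : ℕ) (f : ℕ → ℕ) : ℕ → ℕ :=
  fun i => f i - conjFn (minusPart l f) i

/-- The concatenation `(σ⁻_1, …, σ⁻_l, σ⁺_1, σ⁺_2, …)`. -/
noncomputable def concatParts (l : ℕ) (f : ℕ → ℕ) : ℕ → ℕ :=
  fun i => if i < l then minusPart l f i else plusPart l f (i - l)

/-- The `l`-twisted dominance order. -/
def TwistedDom (l : ℕ) (f g : ℕ → ℕ) : Prop :=
  Dom (concatParts l f) (concatParts l g)

section Aux

/-- A finite, downward-closed set of naturals is an initial segment. -/
lemma mem_iff_lt_ncard {S : Set ℕ} (hfin : S.Finite)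
    (hdc : ∀ i j : ℕ, i ≤ j → j ∈ S → i ∈ S) (i : ℕ) : i ∈ S ↔ i < S.ncard := by
  constructor
  · intro hi
    have hsub : Set.Iio (i + 1) ⊆ S := by
      intro j hj
      exact hdc j i (by simpa using Nat.lt_succ_iff.mp hj) hi
    have h1 : (Set.Iio (i + 1)).ncard ≤ S.ncard := Set.ncard_le_ncard hsub hfin
    have h2 : (Set.Iio (i + 1)).ncard = i + 1 := by
      rw [← Finset.coe_range, Set.ncard_coe_finset, Finset.card_range]
    omega
  · intro h
    by_contra hi
    have hsub : S ⊆ Set.Iio i := by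
      intro j hj
      by_contra hj'
      exact hi (hdc i j (le_of_not_gt hj') hj)
    have h1 : S.ncard ≤ (Set.Iio i).ncard :=
      Set.ncard_le_ncard hsub (Set.finite_Iio i)
    have h2 : (Set.Iio i).ncard = i := by
      rw [← Finset.coe_range, Set.ncard_coe_finset, Finset.card_range]
    omega

lemma lt_conjFn_iff {f : ℕ → ℕ} (hf : IsPartition f) (i j : ℕ) :
    i < conjFn f j ↔ j < f i := by
  obtain ⟨hmono, N, hN⟩ := hf
  have hfin : {i : ℕ | j < f i}.Finite := by
    apply Set.Finite.subset (Set.finite_Iio N)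
    intro k hk
    simp only [Set.mem_setOf_eq] at hk
    simp only [Set.mem_Iio]
    by_contra h
    have := hN k (le_of_not_gt h)
    omega
  have hdc : ∀ a b : ℕ, a ≤ b → b ∈ {i : ℕ | j < f i} → a ∈ {i : ℕ | j < f i} := by
    intro a b hab hb
    exact lt_of_lt_of_le hb (hmono a b hab)
  exact (mem_iff_lt_ncard hfin hdc i).symm

lemma conjFn_eq_card {f : ℕ → ℕ} {N : ℕ} (hN : ∀ i, N ≤ i → f i = 0) (j : ℕ) :
    conjFn f j = ((Finset.range N).filter (fun i => j < f i)).card := by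
  rw [conjFn, ← Set.ncard_coe_finset]
  congr 1
  ext i
  simp only [Finset.coe_filter, Finset.mem_range, Set.mem_setOf_eq]
  constructor
  · intro h
    refine ⟨?_, h⟩
    by_contra hc
    have := hN i (by omega)
    omega
  · tauto

lemma conjFn_minusPart {f : ℕ → ℕ} (hf : IsPartition f) (l i : ℕ) :
    conjFn (minusPart l f) i = min (f i) l := by
  rw [conjFn]
  have hset : {j : ℕ | i < minusPart l f j} = Set.Iio (min (f i) l) := by
    ext j
    simp only [Set.mem_setOf_eq, minusPart, Set.mem_Iio]
    rcases lt_or_ge j l with h | h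
    · simp only [if_pos h]
      rw [show (i < conjFn f j) ↔ (j < f i) from lt_conjFn_iff hf i j]
      omega
    · simp only [if_neg (not_lt.2 h)]
      omega
  rw [hset, ← Finset.coe_range, Set.ncard_coe_finset, Finset.card_range]

lemma plusPart_eq {f : ℕ → ℕ} (hf : IsPartition f) (l i : ℕ) :
    plusPart l f i = f i - l := by
  rw [plusPart, conjFn_minusPart hf]
  omega

lemma lenFn_plusPart {f : ℕ → ℕ} (hf : IsPartition f) (l : ℕ) :
    lenFn (plusPart l f) = conjFn f l := by
  rw [lenFn, conjFn]
  congr 1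
  ext i
  simp only [Set.mem_setOf_eq, plusPart_eq hf]
  omega

lemma sizeFn_eq_sum {f : ℕ → ℕ} {N : ℕ} (hN : ∀ i, N ≤ i → f i = 0) :
    sizeFn f = ∑ i ∈ Finset.range N, f i := by
  rw [sizeFn]
  have hset : {p : ℕ × ℕ | p.2 < f p.1} =
      ↑((Finset.range N).biUnion (fun i => {i} ×ˢ Finset.range (f i))) := by
    ext ⟨a, b⟩
    simp only [Set.mem_setOf_eq, Finset.coe_biUnion, Set.mem_iUnion, Finset.mem_coe,
      Finset.mem_product, Finset.mem_singleton, Finset.mem_range]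
    constructor
    · intro h
      refine ⟨a, ?_, rfl, h⟩
      by_contra hc
      have := hN a (by omega)
      omega
    · rintro ⟨i, _, rfl, h⟩
      exact h
  rw [hset, Set.ncard_coe_finset, Finset.card_biUnion]
  · apply Finset.sum_congr rfl
    intro i _
    simp [Finset.card_product]
  · intro x _ y _ hxy
    simp only [Finset.disjoint_left, Finset.mem_product, Finset.mem_singleton]
    rintro ⟨a, b⟩ ⟨rfl, _⟩ ⟨h, _⟩
    exact hxy h

lemma sum_range_split (g : ℕ → ℕ) (m n : ℕ) :
    ∑ i ∈ Finset.range (m + n), g i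
      = ∑ i ∈ Finset.range m, g i + ∑ i ∈ Finset.range n, g (m + i) := by
  induction n with
  | zero => simp
  | succ n ih =>
    rw [show m + (n + 1) = (m + n) + 1 from rfl, Finset.sum_range_succ, ih,
      Finset.sum_range_succ]
    ring

lemma sum_conjFn {f : ℕ → ℕ} {N : ℕ} (hN : ∀ i, N ≤ i → f i = 0) (l : ℕ) :
    ∑ j ∈ Finset.range l, conjFn f j = ∑ i ∈ Finset.range N, min (f i) l := by
  have h1 : ∀ j, conjFn f j = ∑ i ∈ Finset.range N, (if j < f i then 1 else 0) := by
    intro j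
    rw [conjFn_eq_card hN, Finset.card_filter]
  simp_rw [h1]
  rw [Finset.sum_comm]
  apply Finset.sum_congr rfl
  intro i _
  rw [← Finset.card_filter]
  have : (Finset.range l).filter (fun j => j < f i) = Finset.range (min (f i) l) := by
    ext j
    simp only [Finset.mem_filter, Finset.mem_range]
    omega
  rw [this, Finset.card_range]

/-- Partial sum of the concatenation up to `l + conjFn f l` is the whole size. -/
lemma concat_partial_sum {f : ℕ → ℕ} (hf : IsPartition f) {N : ℕ}
    (hN : ∀ i, N ≤ i → f i = 0) (l q : ℕ) (hq : q ≤ N) :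
    ∑ i ∈ Finset.range (l + q), concatParts l f i
      = ∑ j ∈ Finset.range l, conjFn f j + ∑ i ∈ Finset.range q, (f i - l) := by
  rw [sum_range_split]
  congr 1
  · apply Finset.sum_congr rfl
    intro i hi
    simp only [Finset.mem_range] at hi
    simp [concatParts, minusPart, hi]
  · apply Finset.sum_congr rfl
    intro i _
    have h1 : ¬ (l + i < l) := by omega
    simp only [concatParts, if_neg h1, Nat.add_sub_cancel_left]
    exact plusPart_eq hf l i

end Aux

/-- If `π ⊴̇ σ` in the `l`-twisted dominance order on partitions of the
same size, then `ℓ(π⁺) ≥ ℓ(σ⁺)`. -/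
theorem twisted_dominance_length (l : ℕ) (π σ : ℕ → ℕ)
    (hπ : IsPartition π) (hσ : IsPartition σ) (hsize : sizeFn π = sizeFn σ)
    (hdom : TwistedDom l π σ) :
    lenFn (plusPart l σ) ≤ lenFn (plusPart l π) := by
  obtain ⟨hπm, Nπ, hNπ⟩ := hπ
  obtain ⟨hσm, Nσ, hNσ⟩ := hσ
  have hπ' : IsPartition π := ⟨hπm, Nπ, hNπ⟩
  have hσ' : IsPartition σ := ⟨hσm, Nσ, hNσ⟩
  rw [lenFn_plusPart hπ', lenFn_plusPart hσ']
  set p := conjFn π l with hp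
  by_contra hcon
  push_neg at hcon
  set N := Nπ + Nσ + p + 1 with hNdef
  have hNπ' : ∀ i, N ≤ i → π i = 0 := fun i hi => hNπ i (by omega)
  have hNσ' : ∀ i, N ≤ i → σ i = 0 := fun i hi => hNσ i (by omega)
  have hπeq : ∀ i ∈ Finset.range N, i ∉ Finset.range p → π i - l = 0 := by
    intro i _ hi
    simp only [Finset.mem_range, not_lt] at hi
    have h2 : ¬ (i < conjFn π l) := by omega
    rw [lt_conjFn_iff hπ'] at h2
    omega
  have hLHS : ∑ i ∈ Finset.range (l + p), concatParts l π i = sizeFn π := by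
    rw [concat_partial_sum hπ' hNπ' l p (by omega),
      Finset.sum_subset (Finset.range_subset_range.2 (show p ≤ N by omega)) hπeq,
      sum_conjFn hNπ' l, ← Finset.sum_add_distrib, sizeFn_eq_sum hNπ']
    apply Finset.sum_congr rfl
    intro i _
    omega
  have hσsize : ∑ j ∈ Finset.range l, conjFn σ j + ∑ i ∈ Finset.range N, (σ i - l)
      = sizeFn σ := by
    rw [sum_conjFn hNσ' l, ← Finset.sum_add_distrib, sizeFn_eq_sum hNσ']
    apply Finset.sum_congr rfl
    intro i _
    omega
  have hσp : 0 < σ p - l := by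
    have h2 : p < conjFn σ l := hcon
    rw [lt_conjFn_iff hσ'] at h2
    omega
  have hRHS : ∑ i ∈ Finset.range (l + p), concatParts l σ i < sizeFn σ := by
    rw [concat_partial_sum hσ' hNσ' l p (by omega), ← hσsize]
    have hmono : ∑ i ∈ Finset.range (p + 1), (σ i - l)
        ≤ ∑ i ∈ Finset.range N, (σ i - l) :=
      Finset.sum_le_sum_of_subset (Finset.range_subset_range.2 (by omega))
    rw [Finset.sum_range_succ] at hmono
    omega
  have hkey := hdom (l + p)
  rw [hLHS] at hkey
  omega
end

section
/- Let λ, ω, κ be partitions with at most p parts, κ nonempty, and λ dominated by ω in the extended dominance order (partial sums of λ bounded by those of ω). For M ∈ ℕ, consider the interval I(M) = {σ : σ a partition with at most p parts, λ + Mκ ⊴' σ ⊴' ω + Mκ} where ⊴' is the extended dominance order on partitions of possibly different sizes. Then the map σ ↦ σ + κ is an injection from I(M) into I(M+1), and it is a bijection for all M ≥ L(λ,ω,κ,p), where L(λ,ω,κ,p) is defined as follows: for 1 ≤ k ≤ ℓ(κ) with κ_k > κ_{k+1}, set L_k = (2·Σ_{i<k} ω_i + ω_k + ω_{k+1} − 2·Σ_{i≤k}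 λ_i)/(κ_k − κ_{k+1}), and L_k = 0 if κ_k = κ_{k+1}; then L(λ,ω,κ,p) = max(L_1,...,L_{ℓ(κ)}) if p > ℓ(κ), and L(λ,ω,κ,p) = max(L_1,...,L_{ℓ(κ)−1}, (|ω|−|λ|−ω_{ℓ(κ)})/κ_{ℓ(κ)}) if p = ℓ(κ). -/
/-- `λ + M·κ` componentwise. -/
def addScaled (f κ : ℕ → ℕ) (M : ℕ) : ℕ → ℕ := fun i => f i + M * κ i

/-- The interval `[lo, hi]` in the extended dominance order, cut to partitions with at
most `p` parts. -/
def IntervalSet (p : ℕ) (lo hi : ℕ → ℕ) : Set (ℕ → ℕ) :=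
  {σ | IsPartition σ ∧ lenFn σ ≤ p ∧ Dom lo σ ∧ Dom σ hi}

/-! Adding `κ` preserves being a partition with at most `p` parts and shifts both dominance
bounds by the partial sums of `κ`, so it maps `I(M)` injectively into `I(M + 1)`. For
surjectivity, let `τ ∈ I(M + 1)`. Squeezing the second differences of the partial sums of `τ`
between those of `λ + (M + 1)κ` and `ω + (M + 1)κ`, the bound `M ≥ L` gives
`τ_k - τ_{k+1} ≥ κ_k - κ_{k+1}` for `k < ℓ(κ)`; when `p = ℓ(κ)` the last of these instead
follows from `τ_{p+1} = 0` and the sizes `|λ|`, `|ω|`. Hence `κ ≤ τ` and `τ - κ` is a partition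
in `I(M)`. -/

namespace IsPartition

variable {f g : ℕ → ℕ}

theorem add (hf : IsPartition f) (hg : IsPartition g) : IsPartition (f + g) := by
  obtain ⟨hf_anti, N₁, hN₁⟩ := hf
  obtain ⟨hg_anti, N₂, hN₂⟩ := hg
  refine ⟨fun i j hij => add_le_add (hf_anti i j hij) (hg_anti i j hij), max N₁ N₂, fun i hi => ?_⟩
  simp [hN₁ i (le_of_max_le_left hi), hN₂ i (le_of_max_le_right hi)]

theorem eq_zero_of_lenFn_le (hf : IsPartition f) {i : ℕ} (hi : lenFn f ≤ i) : f i = 0 := by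
  obtain ⟨hf_anti, N, hN⟩ := hf
  by_contra hne
  have hfin : {j | f j ≠ 0}.Finite :=
    (Set.finite_Iio N).subset fun j hj => not_le.mp fun hNj => hj (hN j hNj)
  have hsub : Set.Iic i ⊆ {j | f j ≠ 0} := fun j hj =>
    Nat.pos_iff_ne_zero.mp ((Nat.pos_of_ne_zero hne).trans_le (hf_anti j i hj))
  have := Set.ncard_le_ncard hsub hfin
  rw [Set.ncard_Iic_nat] at this
  exact absurd hi (by unfold lenFn; omega)

end IsPartition

theorem lenFn_le_of_eq_zero {f : ℕ → ℕ} {p : ℕ} (hf : ∀ i, p ≤ i → f i = 0) : lenFn f ≤ p := by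
  have hsub : {i | f i ≠ 0} ⊆ Set.Iio p := fun i hi => not_le.mp fun hpi => hi (hf i hpi)
  simpa [lenFn] using Set.ncard_le_ncard hsub (Set.finite_Iio p)

theorem sizeFn_eq_sum_range {f : ℕ → ℕ} {n : ℕ} (hf : ∀ i, n ≤ i → f i = 0) :
    sizeFn f = ∑ i ∈ Finset.range n, f i := by
  have hset : {q : ℕ × ℕ | q.2 < f q.1} =
      ↑((Finset.range n).biUnion fun i => {i} ×ˢ Finset.range (f i)) := by
    ext ⟨a, b⟩
    simp only [Set.mem_ofPred_eq, Finset.coe_biUnion, Set.mem_iUnion, Finset.mem_coe,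
      Finset.mem_range, Finset.mem_product, Finset.mem_singleton, exists_prop]
    constructor
    · intro hb
      exact ⟨a, not_le.mp fun hna => by simp [hf a hna] at hb, rfl, hb⟩
    · rintro ⟨i, -, rfl, hb⟩
      exact hb
  rw [sizeFn, hset, Set.ncard_coe_finset, Finset.card_biUnion]
  · simp
  · intro i _ j _ hij
    simp only [Finset.disjoint_left, Finset.mem_product, Finset.mem_singleton]
    rintro ⟨a, b⟩ ⟨rfl, -⟩ ⟨rfl, -⟩
    exact hij rfl

theorem dom_add_right_iff {f g h : ℕ → ℕ} : Dom (f + h) (g + h) ↔ Dom f g := by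
  simp only [Dom, Pi.add_apply, Finset.sum_add_distrib, add_le_add_iff_right]

theorem addScaled_succ (f κ : ℕ → ℕ) (M : ℕ) :
    addScaled f κ (M + 1) = addScaled f κ M + κ := by
  funext i
  simp only [addScaled, Pi.add_apply]
  ring

theorem sum_range_addScaled (f κ : ℕ → ℕ) (M n : ℕ) :
    ∑ i ∈ Finset.range n, addScaled f κ M i
      = ∑ i ∈ Finset.range n, f i + M * ∑ i ∈ Finset.range n, κ i := by
  simp only [addScaled, Finset.sum_add_distrib, Finset.mul_sum]

theorem sub_le_of_dom {lo hi τ : ℕ → ℕ} (hlo : Dom lo τ) (hhi : Dom τ hi) (k : ℕ) :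
    ((∑ i ∈ Finset.range (k + 1), lo i : ℕ) : ℤ) - (∑ i ∈ Finset.range k, hi i : ℕ) ≤ τ k := by
  have h₁ := hlo (k + 1)
  have h₂ := hhi k
  rw [Finset.sum_range_succ τ] at h₁
  omega

theorem sub_succ_le_of_dom {lo hi τ : ℕ → ℕ} (hlo : Dom lo τ) (hhi : Dom τ hi) (k : ℕ) :
    (τ (k + 1) : ℤ) - τ k ≤ ((∑ i ∈ Finset.range (k + 2), hi i : ℕ) : ℤ)
      + (∑ i ∈ Finset.range k, hi i : ℕ) - 2 * (∑ i ∈ Finset.range (k + 1), lo i : ℕ) := by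
  have h₁ := hhi k
  have h₂ := hlo (k + 1)
  have h₃ := hhi (k + 2)
  rw [Finset.sum_range_succ τ, Finset.sum_range_succ τ] at h₃
  rw [Finset.sum_range_succ τ] at h₂
  omega

section Stability

variable {p M : ℕ} {lam ω κ τ : ℕ → ℕ}

theorem mapsTo_add_intervalSet (hκ : IsPartition κ) (hκp : lenFn κ ≤ p) (lo hi : ℕ → ℕ) :
    Set.MapsTo (· + κ) (IntervalSet p (addScaled lo κ M) (addScaled hi κ M))
      (IntervalSet p (addScaled lo κ (M + 1)) (addScaled hi κ (M + 1))) := by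
  rintro σ ⟨hσ, hσp, hlo, hhi⟩
  rw [addScaled_succ, addScaled_succ]
  refine ⟨hσ.add hκ, lenFn_le_of_eq_zero fun i hi => ?_, dom_add_right_iff.mpr hlo,
    dom_add_right_iff.mpr hhi⟩
  simp [hσ.eq_zero_of_lenFn_le (hσp.trans hi), hκ.eq_zero_of_lenFn_le (hκp.trans hi)]

theorem add_succ_le_of_le_mul (hlo : Dom (addScaled lam κ (M + 1)) τ)
    (hhi : Dom τ (addScaled ω κ (M + 1))) {k : ℕ}
    (hM : 2 * (∑ i ∈ Finset.range k, (ω i : ℤ)) + (ω k : ℤ) + (ω (k + 1) : ℤ)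
        - 2 * (∑ i ∈ Finset.range (k + 1), (lam i : ℤ)) ≤ (M : ℤ) * ((κ k : ℤ) - (κ (k + 1) : ℤ))) :
    κ k + τ (k + 1) ≤ τ k + κ (k + 1) := by
  have h := sub_succ_le_of_dom hlo hhi k
  simp only [sum_range_addScaled, Finset.sum_range_succ] at h hM
  push_cast [addScaled] at h
  linarith

theorem le_of_le_mul (hlo : Dom (addScaled lam κ (M + 1)) τ)
    (hhi : Dom τ (addScaled ω κ (M + 1))) {k : ℕ}
    (hM : (∑ i ∈ Finset.range k, (ω i : ℤ)) - ∑ i ∈ Finset.range (k + 1), (lam i : ℤ)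
        ≤ (M : ℤ) * (κ k : ℤ)) :
    κ k ≤ τ k := by
  have h := sub_le_of_dom hlo hhi k
  simp only [sum_range_addScaled, Finset.sum_range_succ] at h hM
  push_cast [addScaled] at h
  linarith

theorem le_of_add_succ_le {n : ℕ} (hκ : ∀ i, n ≤ i → κ i = 0)
    (h : ∀ k, κ k + τ (k + 1) ≤ τ k + κ (k + 1)) (i : ℕ) : κ i ≤ τ i := by
  have hanti : Antitone fun i => (τ i : ℤ) - κ i :=
    antitone_nat_of_succ_le fun k => by have := h k; omega
  have hmax : (τ (max i n) : ℤ) - κ (max i n) ≤ τ i - κ i := hanti (le_max_left i n)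
  have := hκ _ (le_max_right i n)
  omega

theorem IsPartition.sub_of_add_succ_le (hτ : IsPartition τ) (hκ : ∀ k, κ k ≤ τ k)
    (h : ∀ k, κ k + τ (k + 1) ≤ τ k + κ (k + 1)) : IsPartition (τ - κ) := by
  obtain ⟨-, N, hN⟩ := hτ
  refine ⟨antitone_nat_of_succ_le fun k => ?_, N, fun i hi => ?_⟩
  · have := h k
    have := hκ k
    have := hκ (k + 1)
    simp only [Pi.sub_apply]
    omega
  · simp [hN i hi]

/-- `L(λ, ω, κ, p) ≤ M`, with the positive denominators `κ_k - κ_{k+1}` and `κ_{ℓ(κ)}`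
cleared; parts are indexed from `0`. -/
def AboveStabilityBound (p : ℕ) (lam ω κ : ℕ → ℕ) (M : ℕ) : Prop :=
  (∀ k : ℕ, 1 ≤ k → k ≤ lenFn κ → (k < lenFn κ ∨ lenFn κ < p) → κ k < κ (k - 1) →
    2 * (∑ i ∈ Finset.range (k - 1), (ω i : ℤ)) + (ω (k - 1) : ℤ) + (ω k : ℤ)
        - 2 * (∑ i ∈ Finset.range k, (lam i : ℤ))
      ≤ (M : ℤ) * ((κ (k - 1) : ℤ) - (κ k : ℤ))) ∧
  (p = lenFn κ →
    (sizeFn ω : ℤ) - (sizeFn lam : ℤ) - (ω (lenFn κ - 1) : ℤ) ≤ (M : ℤ) * (κ (lenFn κ - 1) : ℤ))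

theorem add_succ_le_of_aboveStabilityBound (hlam : IsPartition lam) (hω : IsPartition ω)
    (hκ : IsPartition κ) (hlamp : lenFn lam ≤ p) (hωp : lenFn ω ≤ p) (hκp : lenFn κ ≤ p)
    (hM : AboveStabilityBound p lam ω κ M)
    (hτ : τ ∈ IntervalSet p (addScaled lam κ (M + 1)) (addScaled ω κ (M + 1))) (k : ℕ) :
    κ k + τ (k + 1) ≤ τ k + κ (k + 1) := by
  obtain ⟨hτp, hτlen, hlo, hhi⟩ := hτ
  rcases (hκ.1 k (k + 1) k.le_succ).lt_or_eq with hlt | heq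
  · have hk : k < lenFn κ := not_le.mp fun hk => by simp [hκ.eq_zero_of_lenFn_le hk] at hlt
    by_cases hinner : k + 1 < lenFn κ ∨ lenFn κ < p
    · exact add_succ_le_of_le_mul hlo hhi
        (by simpa using hM.1 (k + 1) (by omega) (by omega) hinner (by simpa using hlt))
    · have hp : p = lenFn κ := by omega
      have hℓ : lenFn κ - 1 = k := by omega
      have hsize := hM.2 hp
      rw [sizeFn_eq_sum_range (n := k + 1) fun i hi => hω.eq_zero_of_lenFn_le (by omega),
        sizeFn_eq_sum_range (n := k + 1) fun i hi => hlam.eq_zero_of_lenFn_le (by omega), hℓ,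
        Finset.sum_range_succ ω] at hsize
      push_cast at hsize
      have := le_of_le_mul hlo hhi (k := k) (by linarith)
      have := hτp.eq_zero_of_lenFn_le (i := k + 1) (by omega)
      omega
  · have := hτp.1 k (k + 1) k.le_succ
    omega

theorem surjOn_add_intervalSet (hlam : IsPartition lam) (hω : IsPartition ω)
    (hκ : IsPartition κ) (hlamp : lenFn lam ≤ p) (hωp : lenFn ω ≤ p) (hκp : lenFn κ ≤ p)
    (hM : AboveStabilityBound p lam ω κ M) :
    Set.SurjOn (· + κ) (IntervalSet p (addScaled lam κ M) (addScaled ω κ M))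
      (IntervalSet p (addScaled lam κ (M + 1)) (addScaled ω κ (M + 1))) := by
  intro τ hτ
  have hstep := add_succ_le_of_aboveStabilityBound hlam hω hκ hlamp hωp hκp hM hτ
  have hle := le_of_add_succ_le (fun i hi => hκ.eq_zero_of_lenFn_le hi) hstep
  have hτeq : τ - κ + κ = τ := funext fun i => Nat.sub_add_cancel (hle i)
  refine ⟨τ - κ, ?_, hτeq⟩
  obtain ⟨hτp, hτlen, hlo, hhi⟩ := hτ
  rw [addScaled_succ, ← hτeq] at hlo hhi
  refine ⟨hτp.sub_of_add_succ_le hle hstep, lenFn_le_of_eq_zero fun i hi => ?_,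
    dom_add_right_iff.mp hlo, dom_add_right_iff.mp hhi⟩
  simp [hτp.eq_zero_of_lenFn_le (hτlen.trans hi)]

end Stability

theorem interval_stability_general (p : ℕ) (lam ω κ : ℕ → ℕ)
    (hlam : IsPartition lam) (hω : IsPartition ω) (hκ : IsPartition κ)
    (hlamp : lenFn lam ≤ p) (hωp : lenFn ω ≤ p) (hκp : lenFn κ ≤ p) :
    (∀ M : ℕ,
      Set.MapsTo (fun σ : ℕ → ℕ => fun i => σ i + κ i)
        (IntervalSet p (addScaled lam κ M) (addScaled ω κ M))
        (IntervalSet p (addScaled lam κ (M + 1)) (addScaled ω κ (M + 1))) ∧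
      Set.InjOn (fun σ : ℕ → ℕ => fun i => σ i + κ i)
        (IntervalSet p (addScaled lam κ M) (addScaled ω κ M))) ∧
    (∀ M : ℕ,
      (∀ k : ℕ, 1 ≤ k → k ≤ lenFn κ → (k < lenFn κ ∨ lenFn κ < p) → κ k < κ (k - 1) →
        2 * (∑ i ∈ Finset.range (k - 1), (ω i : ℤ)) + (ω (k - 1) : ℤ) + (ω k : ℤ)
            - 2 * (∑ i ∈ Finset.range k, (lam i : ℤ))
          ≤ (M : ℤ) * ((κ (k - 1) : ℤ) - (κ k : ℤ))) →
      (p = lenFn κ →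
        (sizeFn ω : ℤ) - (sizeFn lam : ℤ) - (ω (lenFn κ - 1) : ℤ)
          ≤ (M : ℤ) * (κ (lenFn κ - 1) : ℤ)) →
      Set.BijOn (fun σ : ℕ → ℕ => fun i => σ i + κ i)
        (IntervalSet p (addScaled lam κ M) (addScaled ω κ M))
        (IntervalSet p (addScaled lam κ (M + 1)) (addScaled ω κ (M + 1)))) := by
  have hinj (M : ℕ) : Set.InjOn (· + κ) (IntervalSet p (addScaled lam κ M) (addScaled ω κ M)) :=
    (add_left_injective κ).injOn
  exact ⟨fun M => ⟨mapsTo_add_intervalSet hκ hκp lam ω, hinj M⟩, fun M hk hsize =>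
    ⟨mapsTo_add_intervalSet hκ hκp lam ω, hinj M,
      surjOn_add_intervalSet hlam hω hκ hlamp hωp hκp ⟨hk, hsize⟩⟩⟩

/-- Let `λ ⊴' ω` and `κ ≠ ∅` be partitions with at most `p` parts.  For
every `M` the map `σ ↦ σ + κ` is an injection from the interval
`[λ + Mκ, ω + Mκ]` (cut to partitions of length `≤ p`) into `[λ + (M+1)κ, ω + (M+1)κ]`,
and it is a bijection whenever `M ≥ L(λ,ω,κ,p)`, the bound from Definition 8.2 (here
expressed by clearing the positive denominators `κ_k - κ_{k+1}`, resp. `κ_{ℓ(κ)}`). -/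
theorem interval_stability (p : ℕ) (lam ω κ : ℕ → ℕ)
    (hlam : IsPartition lam) (hω : IsPartition ω) (hκ : IsPartition κ)
    (hlamp : lenFn lam ≤ p) (hωp : lenFn ω ≤ p) (hκp : lenFn κ ≤ p)
    (hκne : κ 0 ≠ 0) (hdom : Dom lam ω) :
    (∀ M : ℕ,
      Set.MapsTo (fun σ : ℕ → ℕ => fun i => σ i + κ i)
        (IntervalSet p (addScaled lam κ M) (addScaled ω κ M))
        (IntervalSet p (addScaled lam κ (M + 1)) (addScaled ω κ (M + 1))) ∧
      Set.InjOn (fun σ : ℕ → ℕ => fun i => σ i + κ i)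
        (IntervalSet p (addScaled lam κ M) (addScaled ω κ M))) ∧
    (∀ M : ℕ,
      (∀ k : ℕ, 1 ≤ k → k ≤ lenFn κ → (k < lenFn κ ∨ lenFn κ < p) → κ k < κ (k - 1) →
        2 * (∑ i ∈ Finset.range (k - 1), (ω i : ℤ)) + (ω (k - 1) : ℤ) + (ω k : ℤ)
            - 2 * (∑ i ∈ Finset.range k, (lam i : ℤ))
          ≤ (M : ℤ) * ((κ (k - 1) : ℤ) - (κ k : ℤ))) →
      (p = lenFn κ →
        (sizeFn ω : ℤ) - (sizeFn lam : ℤ) - (ω (lenFn κ - 1) : ℤ)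
          ≤ (M : ℤ) * (κ (lenFn κ - 1) : ℤ)) →
      Set.BijOn (fun σ : ℕ → ℕ => fun i => σ i + κ i)
        (IntervalSet p (addScaled lam κ M) (addScaled ω κ M))
        (IntervalSet p (addScaled lam κ (M + 1)) (addScaled ω κ (M + 1)))) :=
  interval_stability_general p lam ω κ hlam hω hκ hlamp hωp hκp
end
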